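/- arXiv:2203.16902 — 2 statements merged into one kernel-verified Lean document; each statement's English description precedes it below -/
import Mathlib

section
/- Let d ≥ 2, N ≥ 1, u ∈ (Z/dZ)^N, and β ∈ Z/dZ. Define σ(β) to be the number of φ ∈ {0,1}^N such that Σ_{i=1}^N u^{(i)} φ^{(i)} = β in Z/dZ. If σ(β) ≥ 1, then σ(β) ≥ 2^{N−(d−1)} (in particular, when N ≥ d−1 this is a nontrivial bound; for N < d−1 the bound 2^{N-(d-1)} is interpreted as being at most 1). -/
/-!
Let `A` be the set of subset sums of `u` and `A'` that of its tail. Then `A = A' ∪ (A' + u 0)`, and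
`σ(β)` for `u` is `σ(β) + σ(β - u 0)` for the tail. If `A = A'`, then
`A' + u 0 = A'`, so both `β` and `β - u 0` are attained by the tail and the count doubles;
otherwise `|A|` grows by one, which pays for the doubling of `2 ^ N`. By induction,
`2 ^ (N + 1) ≤ σ(β) · 2 ^ |A|`, and `|A| ≤ d`.
-/

open scoped Finset

theorem Finset.sub_mem_of_image_add_subset {G : Type*} [AddCommGroup G] [DecidableEq G]
    {s : Finset G} {a b : G} (h : s.image (· + a) ⊆ s) (hb : b ∈ s) : b - a ∈ s := by
  have himage : s.image (· + a) = s :=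
    Finset.eq_of_subset_of_card_le h (Finset.card_image_of_injective _ (add_left_injective a)).ge
  obtain ⟨c, hc, rfl⟩ := Finset.mem_image.1 (himage.symm ▸ hb)
  simpa using hc

section AddCommMonoid

variable {M : Type*} [AddCommMonoid M] {N : ℕ}

def subsetSum (u : Fin N → M) (φ : Fin N → Bool) : M :=
  ∑ i, if φ i then u i else 0

theorem subsetSum_cons (u : Fin (N + 1) → M) (b : Bool) (ψ : Fin N → Bool) :
    subsetSum u (Fin.cons b ψ) = (if b then u 0 else 0) + subsetSum (Fin.tail u) ψ := by
  simp [subsetSum, Fin.sum_univ_succ, Fin.tail]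

variable [DecidableEq M]

def subsetSumCount (u : Fin N → M) (β : M) : ℕ :=
  #{φ | subsetSum u φ = β}

def subsetSums (u : Fin N → M) : Finset M :=
  Finset.univ.image (subsetSum u)

theorem subsetSumCount_pos_iff {u : Fin N → M} {β : M} :
    0 < subsetSumCount u β ↔ β ∈ subsetSums u := by
  simp [subsetSumCount, subsetSums, Finset.card_pos, Finset.filter_nonempty_iff]

end AddCommMonoid

section AddCommGroup

variable {G : Type*} [AddCommGroup G] [DecidableEq G] {N : ℕ}

theorem subsetSumCount_succ (u : Fin (N + 1) → G) (β : G) :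
    subsetSumCount u β =
      subsetSumCount (Fin.tail u) β + subsetSumCount (Fin.tail u) (β - u 0) := by
  simp only [subsetSumCount, Finset.card_filter]
  rw [← (Fin.consEquiv fun _ ↦ Bool).sum_comp, Fintype.sum_prod_type, Fintype.sum_bool, add_comm]
  simp only [Fin.consEquiv, Equiv.coe_fn_mk, subsetSum_cons]
  simp [eq_sub_iff_add_eq, add_comm]

theorem mem_subsetSums_succ {u : Fin (N + 1) → G} {β : G} :
    β ∈ subsetSums u ↔ β ∈ subsetSums (Fin.tail u) ∨ β - u 0 ∈ subsetSums (Fin.tail u) := by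
  simp only [← subsetSumCount_pos_iff, subsetSumCount_succ]
  omega

theorem subsetSums_tail_subset (u : Fin (N + 1) → G) :
    subsetSums (Fin.tail u) ⊆ subsetSums u :=
  fun _ hβ ↦ mem_subsetSums_succ.2 (.inl hβ)

theorem image_add_subsetSums_tail_subset (u : Fin (N + 1) → G) :
    (subsetSums (Fin.tail u)).image (· + u 0) ⊆ subsetSums u := by
  intro β hβ
  obtain ⟨γ, hγ, rfl⟩ := Finset.mem_image.1 hβ
  exact mem_subsetSums_succ.2 (.inr (by simpa using hγ))

theorem mem_subsetSums_tail_of_card_le {u : Fin (N + 1) → G} {β : G}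
    (hcard : #(subsetSums u) ≤ #(subsetSums (Fin.tail u))) (hβ : β ∈ subsetSums u) :
    β ∈ subsetSums (Fin.tail u) ∧ β - u 0 ∈ subsetSums (Fin.tail u) := by
  have heq := Finset.eq_of_subset_of_card_le (subsetSums_tail_subset u) hcard
  rw [← heq] at hβ
  exact ⟨hβ, Finset.sub_mem_of_image_add_subset
    ((image_add_subsetSums_tail_subset u).trans heq.ge) hβ⟩

theorem two_pow_le_subsetSumCount_mul {u : Fin N → G} {β : G} (hβ : β ∈ subsetSums u) :
    2 ^ (N + 1) ≤ subsetSumCount u β * 2 ^ #(subsetSums u) := by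
  induction N generalizing β with
  | zero =>
    obtain rfl : β = 0 := by simpa [subsetSums, subsetSum] using hβ
    have hsums : subsetSums u = {0} := by simp [subsetSums, subsetSum, Finset.univ_unique]
    have hcount : subsetSumCount u 0 = 1 := by simp [subsetSumCount, subsetSum]
    simp [hsums, hcount]
  | succ N ih =>
    set A := subsetSums u
    set A' := subsetSums (Fin.tail u)
    set c₁ := subsetSumCount (Fin.tail u) β
    set c₂ := subsetSumCount (Fin.tail u) (β - u 0)
    rw [subsetSumCount_succ]
    by_cases hgrow : #A ≤ #A'
    · obtain ⟨h₁, h₂⟩ := mem_subsetSums_tail_of_card_le hgrow hβ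
      have hA : #A' ≤ #A := Finset.card_le_card (subsetSums_tail_subset u)
      calc 2 ^ (N + 2) = 2 ^ (N + 1) + 2 ^ (N + 1) := by ring
        _ ≤ c₁ * 2 ^ #A' + c₂ * 2 ^ #A' := add_le_add (ih h₁) (ih h₂)
        _ = (c₁ + c₂) * 2 ^ #A' := by ring
        _ ≤ (c₁ + c₂) * 2 ^ #A := by gcongr; norm_num
    · have hsum : 2 ^ (N + 1) ≤ (c₁ + c₂) * 2 ^ #A' := by
        rcases mem_subsetSums_succ.1 hβ with h | h
        · exact (ih h).trans (by gcongr; omega)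
        · exact (ih h).trans (by gcongr; omega)
      calc 2 ^ (N + 2) = 2 * 2 ^ (N + 1) := by ring
        _ ≤ 2 * ((c₁ + c₂) * 2 ^ #A') := by gcongr
        _ = (c₁ + c₂) * 2 ^ (#A' + 1) := by ring
        _ ≤ (c₁ + c₂) * 2 ^ #A := by gcongr <;> omega

end AddCommGroup

theorem sigma_lower_bound_general (d N : ℕ) [NeZero d]
    (u : Fin N → ZMod d) (β : ZMod d)
    (hpos : 1 ≤ Fintype.card {φ : Fin N → Bool // ∑ i, (if φ i then u i else 0) = β}) :
    (2 : ℝ) ^ ((N : ℤ) - ((d : ℤ) - 1)) ≤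
      (Fintype.card {φ : Fin N → Bool // ∑ i, (if φ i then u i else 0) = β} : ℝ) := by
  have hcount : Fintype.card {φ : Fin N → Bool // ∑ i, (if φ i then u i else 0) = β} =
      subsetSumCount u β := Fintype.card_subtype _
  rw [hcount] at hpos ⊢
  have hsums : #(subsetSums u) ≤ d := (Finset.card_le_univ _).trans_eq (ZMod.card d)
  have hbound : 2 ^ (N + 1) ≤ subsetSumCount u β * 2 ^ d :=
    (two_pow_le_subsetSumCount_mul (subsetSumCount_pos_iff.1 hpos)).trans (by gcongr; norm_num)
  calc (2 : ℝ) ^ ((N : ℤ) - ((d : ℤ) - 1)) = 2 ^ (N + 1) / 2 ^ d := by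
        rw [← zpow_natCast, ← zpow_natCast, ← zpow_sub₀ two_ne_zero]
        push_cast
        ring_nf
    _ ≤ subsetSumCount u β := by
        rw [div_le_iff₀ (by positivity)]
        exact_mod_cast hbound

theorem sigma_lower_bound (d N : ℕ) [NeZero d] (hd : 2 ≤ d) (hN : 1 ≤ N)
    (u : Fin N → ZMod d) (β : ZMod d)
    (hpos : 1 ≤ Fintype.card {φ : Fin N → Bool // ∑ i, (if φ i then u i else 0) = β}) :
    (2 : ℝ) ^ ((N : ℤ) - ((d : ℤ) - 1)) ≤
      (Fintype.card {φ : Fin N → Bool // ∑ i, (if φ i then u i else 0) = β} : ℝ) :=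
  sigma_lower_bound_general d N u β hpos
end

section
/- Let d ≥ 2, N ≥ 2, and suppose u ∈ (Z/dZ)^N has the property that the only φ ∈ {0,1}^N with Σ_i u^{(i)} φ^{(i)} = 0 (mod d) are the all-zero and all-one vectors (the latter requiring Σ_i u^{(i)} = 0). Then 2 ≥ 2^{N−(d−1)}, equivalently 1 ≥ ⌈(N−1)/(d−1)⌉. -/
theorem k_two_bound (d N : ℕ) [NeZero d] (hd : 2 ≤ d) (hN : 2 ≤ N)
    (u : Fin N → ZMod d) (hsum : ∑ i, u i = 0)
    (honly : ∀ φ : Fin N → Bool, (∑ i, (if φ i then u i else 0)) = 0 →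
      φ = (fun _ => false) ∨ φ = (fun _ => true)) :
    N ≤ d + 1 ∧ ((N - 1 : ℚ) / ((d : ℚ) - 1)) ≤ 1 := by
  -- interval sums are nonzero
  have key : ∀ a b : Fin N, (a:ℕ) < (b:ℕ) →
      (∑ i : Fin N, if (a:ℕ) ≤ (i:ℕ) ∧ (i:ℕ) < (b:ℕ) then u i else 0) ≠ 0 := by
    intro a b hab hzero
    set φ : Fin N → Bool := fun i => decide ((a:ℕ) ≤ (i:ℕ) ∧ (i:ℕ) < (b:ℕ)) with hφ
    have h0 : (∑ i, (if φ i then u i else 0)) = 0 := by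
      simpa [hφ, decide_eq_true_eq] using hzero
    rcases honly φ h0 with h | h
    · have := congrFun h a
      simp [hφ] at this
      omega
    · have := congrFun h b
      simp [hφ] at this
  have split : ∀ a b : Fin N, (a:ℕ) ≤ (b:ℕ) →
      (∑ i : Fin N, if (i:ℕ) < (a:ℕ) then u i else 0)
      + (∑ i : Fin N, if (a:ℕ) ≤ (i:ℕ) ∧ (i:ℕ) < (b:ℕ) then u i else 0)
      = ∑ i : Fin N, if (i:ℕ) < (b:ℕ) then u i else 0 := by
    intro a b hab
    rw [← Finset.sum_add_distrib]
    refine Finset.sum_congr rfl ?_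
    intro i _
    split_ifs <;> simp_all <;> omega
  have sinj : Function.Injective (fun j : Fin N =>
      ∑ i : Fin N, if (i:ℕ) < (j:ℕ) then u i else 0) := by
    intro a b hab
    simp only at hab
    by_contra hne
    rcases Nat.lt_or_ge (a:ℕ) (b:ℕ) with h | h
    · have hs := split a b h.le
      rw [hab] at hs
      exact key a b h (by linear_combination hs)
    · have h' : (b:ℕ) < (a:ℕ) := lt_of_le_of_ne h (fun e => hne (Fin.ext e.symm))
      have hs := split b a h'.le
      rw [hab] at hs
      exact key b a h' (by linear_combination hs)
  have hcard := Fintype.card_le_of_injective _ sinj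
  simp [ZMod.card] at hcard
  refine ⟨by omega, ?_⟩
  have hdpos : (0:ℚ) < (d:ℚ) - 1 := by
    have : (2:ℚ) ≤ d := by exact_mod_cast hd
    linarith
  rw [div_le_one hdpos]
  have : (N:ℚ) ≤ d := by exact_mod_cast hcard
  linarith
end
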